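/- For every a ∈ B, every α ∈ {1,…,d}^m and every i ∈ {1,…,n}, the degree-m multiplet elements satisfy the commutation relation ψ̂_{αi}·a = Σ_{β ∈ {1,…,d}^m} τ^m_{αβ}(a)·ψ̂_{βi}. -/
import Mathlib


open scoped BigOperators

/-- The ordered monomial `Ψ_{αω} = ψ_{α₁ω₁}·ψ_{α₂ω₂}···ψ_{α_mω_m}`. -/
def prodPsi {B : Type*} [Ring B] {d n m : ℕ} (ψ : Fin d → Fin n → B)
    (α : Fin m → Fin d) (ω : Fin m → Fin n) : B :=
  (List.ofFn fun t => ψ (α t) (ω t)).prod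

/-- The iterated map `τ^m_{αβ}(a) = Σ_{ω ∈ {1,…,n}^m} Ψ_{αω}·a·Ψ_{βω}*`. -/
noncomputable def tauIter {B : Type*} [Ring B] [StarRing B] {d n m : ℕ}
    (ψ : Fin d → Fin n → B) (a : B) (α β : Fin m → Fin d) : B :=
  ∑ ω : Fin m → Fin n, prodPsi ψ α ω * a * star (prodPsi ψ β ω)

/-- The degree-`m` multiplet elements `ψ̂_{αi} = Σ_{ω ∈ {1,…,n}^m} a_{iω}·Ψ_{αω}`. -/
noncomputable def psiHat {B : Type*} [Ring B] [Algebra ℂ B] {d n m : ℕ}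
    (ψ : Fin d → Fin n → B) (c : Fin n → (Fin m → Fin n) → ℂ)
    (α : Fin m → Fin d) (i : Fin n) : B :=
  ∑ ω : Fin m → Fin n, c i ω • prodPsi ψ α ω

lemma prodPsi_succ {B : Type*} [Ring B] {d n m : ℕ} (ψ : Fin d → Fin n → B)
    (α : Fin (m+1) → Fin d) (ω : Fin (m+1) → Fin n) :
    prodPsi ψ α ω = ψ (α 0) (ω 0) * prodPsi ψ (Fin.tail α) (Fin.tail ω) := by
  simp [prodPsi, List.ofFn_succ, Fin.tail]

lemma completeness {B : Type*} [Ring B] [StarRing B] {d n : ℕ}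
    (ψ : Fin d → Fin n → B)
    (horth : ∀ i j : Fin n, ∑ k, star (ψ k i) * ψ k j = if i = j then (1 : B) else 0) :
    ∀ (m : ℕ) (ω ω' : Fin m → Fin n),
      ∑ β : Fin m → Fin d, star (prodPsi ψ β ω) * prodPsi ψ β ω'
        = if ω = ω' then (1 : B) else 0 := by
  intro m
  induction m with
  | zero =>
    intro ω ω'
    simp [prodPsi, Subsingleton.elim ω ω']
  | succ m ih =>
    intro ω ω'
    rw [← Fintype.sum_equiv (Fin.consEquiv fun _ : Fin (m+1) => Fin d)
        (fun p => star (prodPsi ψ (Fin.cons p.1 p.2) ω) * prodPsi ψ (Fin.cons p.1 p.2) ω')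
        (fun β => star (prodPsi ψ β ω) * prodPsi ψ β ω') (fun p => rfl)]
    rw [Fintype.sum_prod_type_right]
    have key : ∀ p : Fin m → Fin d,
        ∑ k : Fin d, star (prodPsi ψ (Fin.cons k p) ω) * prodPsi ψ (Fin.cons k p) ω'
          = star (prodPsi ψ p (Fin.tail ω)) *
              ((if ω 0 = ω' 0 then (1:B) else 0) * prodPsi ψ p (Fin.tail ω')) := by
      intro p
      simp_rw [prodPsi_succ, Fin.cons_zero, Fin.tail_cons, star_mul]
      calc ∑ k : Fin d, star (prodPsi ψ p (Fin.tail ω)) * star (ψ k (ω 0)) *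
              (ψ k (ω' 0) * prodPsi ψ p (Fin.tail ω'))
          = star (prodPsi ψ p (Fin.tail ω)) *
              ((∑ k : Fin d, star (ψ k (ω 0)) * ψ k (ω' 0)) * prodPsi ψ p (Fin.tail ω')) := by
            rw [Finset.sum_mul, Finset.mul_sum]
            refine Finset.sum_congr rfl fun k _ => by rw [mul_assoc, mul_assoc]
        _ = _ := by rw [horth]
    simp_rw [key]
    by_cases h0 : ω 0 = ω' 0
    · simp only [h0, if_true, one_mul]
      rw [ih]
      by_cases ht : Fin.tail ω = Fin.tail ω'
      · rw [if_pos ht, if_pos]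
        rw [← Fin.cons_self_tail ω, ← Fin.cons_self_tail ω', h0, ht]
      · rw [if_neg ht, if_neg]
        intro h; exact ht (by rw [h])
    · simp only [if_neg h0, zero_mul, mul_zero, Finset.sum_const_zero]
      rw [if_neg]
      intro h; exact h0 (by rw [h])

/-- For every `a ∈ B`, every `α ∈ {1,…,d}^m` and every `i ∈ {1,…,n}`, the
degree-`m` multiplet elements satisfy `ψ̂_{αi}·a = Σ_{β ∈ {1,…,d}^m} τ^m_{αβ}(a)·ψ̂_{βi}`. -/
theorem psiHat_commutation {B : Type*} [Ring B] [Algebra ℂ B] [StarRing B] [StarModule ℂ B]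
    {d n : ℕ} (hd : 1 ≤ d) (hn : 1 ≤ n) (ψ : Fin d → Fin n → B)
    (horth : ∀ i j : Fin n, ∑ k, star (ψ k i) * ψ k j = if i = j then (1 : B) else 0)
    (m : ℕ) (hm : 1 ≤ m) (c : Fin n → (Fin m → Fin n) → ℂ)
    (a : B) (α : Fin m → Fin d) (i : Fin n) :
    psiHat ψ c α i * a = ∑ β : Fin m → Fin d, tauIter ψ a α β * psiHat ψ c β i := by
  have rhs : ∑ β : Fin m → Fin d, tauIter ψ a α β * psiHat ψ c β i
      = ∑ β : Fin m → Fin d, ∑ ω : Fin m → Fin n, ∑ ω' : Fin m → Fin n,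
          c i ω' • (prodPsi ψ α ω * a * (star (prodPsi ψ β ω) * prodPsi ψ β ω')) := by
    simp_rw [tauIter, psiHat, Finset.sum_mul, Finset.mul_sum, mul_smul_comm, mul_assoc]
  rw [rhs, Finset.sum_comm]
  have swap : ∀ ω : Fin m → Fin n,
      ∑ β : Fin m → Fin d, ∑ ω' : Fin m → Fin n,
          c i ω' • (prodPsi ψ α ω * a * (star (prodPsi ψ β ω) * prodPsi ψ β ω'))
        = ∑ ω' : Fin m → Fin n,
          c i ω' • (prodPsi ψ α ω * a * (if ω = ω' then (1:B) else 0)) := fun ω => by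
    rw [Finset.sum_comm]
    refine Finset.sum_congr rfl fun ω' _ => ?_
    rw [← completeness ψ horth m ω ω', Finset.mul_sum, Finset.smul_sum]
  simp_rw [swap]
  have coll : ∀ ω : Fin m → Fin n,
      ∑ ω' : Fin m → Fin n, c i ω' • (prodPsi ψ α ω * a * (if ω = ω' then (1:B) else 0))
        = c i ω • (prodPsi ψ α ω * a) := fun ω => by
    rw [Finset.sum_eq_single ω]
    · simp
    · intro b _ hb; simp [(Ne.symm hb : ¬ ω = b)]
    · simp
  simp_rw [coll, psiHat, Finset.sum_mul, smul_mul_assoc]
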